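/- Let r : [0,∞) → ℝ be a bounded measurable function such that r(t) converges to a real limit r_∞ as t → ∞. Then for every continuous function f : [0,1] → ℝ, the ratio (∫_{0}^{1} f(t) exp(2 r(nt)) dt) / (∫_{0}^{1} exp(2 r(ns)) ds) converges to ∫_{0}^{1} f(t) dt as n → ∞ (n ranging over the natural numbers). -/
import Mathlib


open MeasureTheory Filter

lemma aux_tendsto (r : ℝ → ℝ) (r_inf : ℝ)
    (hmeas : Measurable r)
    (hbdd : ∃ M : ℝ, ∀ t : ℝ, 0 ≤ t → |r t| ≤ M)
    (hconv : Tendsto r atTop (nhds r_inf))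
    (g : ℝ → ℝ) (hg : ContinuousOn g (Set.Icc 0 1)) :
    Tendsto (fun n : ℕ => ∫ t in (0:ℝ)..1, g t * Real.exp (2 * r ((n : ℝ) * t)))
      atTop (nhds ((∫ t in (0:ℝ)..1, g t) * Real.exp (2 * r_inf))) := by
  obtain ⟨M, hM⟩ := hbdd
  obtain ⟨C, hC⟩ := (isCompact_Icc (a := (0:ℝ)) (b := 1)).exists_bound_of_continuousOn hg
  have hIoc : Set.uIoc (0:ℝ) 1 = Set.Ioc 0 1 := Set.uIoc_of_le zero_le_one
  have hlim : (∫ t in (0:ℝ)..1, g t) * Real.exp (2 * r_inf)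
      = ∫ t in (0:ℝ)..1, g t * Real.exp (2 * r_inf) := by
    rw [intervalIntegral.integral_mul_const]
  rw [hlim]
  apply intervalIntegral.tendsto_integral_filter_of_dominated_convergence
    (fun _ => C * Real.exp (2 * M))
  · -- measurability
    refine Filter.Eventually.of_forall (fun n => ?_)
    apply AEStronglyMeasurable.mul
    · exact ((hg.mono (by rw [hIoc]; exact Set.Ioc_subset_Icc_self)).aestronglyMeasurable
        (by rw [hIoc]; exact measurableSet_Ioc))
    · exact (Real.measurable_exp.comp
        ((hmeas.comp (measurable_const_mul _)).const_mul 2)).aestronglyMeasurable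
  · -- bound
    refine Filter.Eventually.of_forall (fun n => ?_)
    refine Filter.Eventually.of_forall (fun t ht => ?_)
    rw [hIoc] at ht
    have ht' : t ∈ Set.Icc (0:ℝ) 1 := Set.Ioc_subset_Icc_self ht
    have h1 : ‖g t‖ ≤ C := hC t ht'
    have h2 : Real.exp (2 * r ((n : ℝ) * t)) ≤ Real.exp (2 * M) := by
      apply Real.exp_le_exp.2
      have := abs_le.1 (hM ((n : ℝ) * t) (mul_nonneg (Nat.cast_nonneg n) ht'.1))
      linarith [this.2]
    calc ‖g t * Real.exp (2 * r ((n : ℝ) * t))‖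
        = ‖g t‖ * Real.exp (2 * r ((n : ℝ) * t)) := by
          rw [norm_mul, Real.norm_eq_abs (Real.exp _), abs_of_pos (Real.exp_pos _)]
      _ ≤ C * Real.exp (2 * M) := by
          apply mul_le_mul h1 h2 (Real.exp_pos _).le ((norm_nonneg _).trans h1)
  · exact intervalIntegrable_const
  · -- pointwise limit
    refine Filter.Eventually.of_forall (fun t ht => ?_)
    rw [hIoc] at ht
    have htend : Tendsto (fun n : ℕ => (n : ℝ) * t) atTop atTop := by
      apply Filter.Tendsto.atTop_mul_const ht.1 tendsto_natCast_atTop_atTop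
    have : Tendsto (fun n : ℕ => r ((n : ℝ) * t)) atTop (nhds r_inf) := hconv.comp htend
    exact (tendsto_const_nhds.mul
      ((Real.continuous_exp.tendsto _).comp (this.const_mul 2)))

/-- Lemma 2.1 in deterministic form: the normalized probability measures on (0,1)
with density proportional to `exp (2 r (n t))` converge vaguely to Lebesgue measure. -/
theorem stmt_1 (r : ℝ → ℝ) (r_inf : ℝ)
    (hmeas : Measurable r)
    (hbdd : ∃ M : ℝ, ∀ t : ℝ, 0 ≤ t → |r t| ≤ M)
    (hconv : Tendsto r atTop (nhds r_inf))
    (f : ℝ → ℝ) (hf : ContinuousOn f (Set.Icc 0 1)) :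
    Tendsto (fun n : ℕ =>
      (∫ t in (0:ℝ)..1, f t * Real.exp (2 * r ((n : ℝ) * t))) /
      (∫ s in (0:ℝ)..1, Real.exp (2 * r ((n : ℝ) * s))))
      atTop (nhds (∫ t in (0:ℝ)..1, f t)) := by
  have hnum := aux_tendsto r r_inf hmeas hbdd hconv f hf
  have hden := aux_tendsto r r_inf hmeas hbdd hconv (fun _ => 1) continuousOn_const
  simp only [one_mul] at hden
  have hden' : (∫ t in (0:ℝ)..1, (1:ℝ)) * Real.exp (2 * r_inf) = Real.exp (2 * r_inf) := by
    simp
  rw [hden'] at hden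
  have := hnum.div hden (Real.exp_ne_zero _)
  rwa [mul_div_assoc, div_self (Real.exp_ne_zero _), mul_one] at this
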